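/- arXiv:0912.5036 — 3 statements merged into one kernel-verified Lean document; each statement's English description precedes it below -/
import Mathlib

section
/- Let α, β : [0,∞) → ℝ be differentiable with α(t) > 0 and α(t) + t·β(t) > 0 for all t ≥ 0, and suppose F(t) = (α(t)β(t) − t·(α'(t))² − 2α(t)α'(t)) / (α(t) + t·β(t)) vanishes identically. Then α(t) + t·α'(t) > 0 for all t ≥ 0. -/
/-!
The numerator of `F` vanishes, which rearranges to `(α + tα')² = α (α + tβ) > 0`, so
`α + tα'` never vanishes on `[0, ∞)`. It is the derivative of `t ↦ t α(t)`, hence has the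
intermediate value property by Darboux's theorem, and it equals `α(0) > 0` at `t = 0`.
-/

open Set

theorem forall_pos_of_hasDerivWithinAt_of_ne_zero {f f' : ℝ → ℝ} {s : Set ℝ} {a : ℝ}
    (hs : Convex ℝ s) (hf : ∀ x ∈ s, HasDerivWithinAt f (f' x) s x)
    (hne : ∀ x ∈ s, f' x ≠ 0) (ha : a ∈ s) (hfa : 0 < f' a) :
    ∀ x ∈ s, 0 < f' x :=
  (hasDerivWithinAt_forall_lt_or_forall_gt_of_forall_ne hs hf hne).resolve_left
    fun hneg => (hneg a ha).not_gt hfa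

theorem add_mul_ne_zero_of_div_eq_zero {a b d t : ℝ} (ha : 0 < a) (hΔ : 0 < a + t * b)
    (hF : (a * b - t * d ^ 2 - 2 * a * d) / (a + t * b) = 0) :
    a + t * d ≠ 0 := by
  have hnum : a * b - t * d ^ 2 - 2 * a * d = 0 :=
    (div_eq_zero_iff.1 hF).resolve_right hΔ.ne'
  have hsq : (a + t * d) ^ 2 = a * (a + t * b) := by linear_combination -t * hnum
  intro h
  rw [h] at hsq
  nlinarith [mul_pos ha hΔ]

theorem stmt_2_general (α β : ℝ → ℝ)
    (hα : ∀ t : ℝ, 0 ≤ t → DifferentiableAt ℝ α t)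
    (hαpos : ∀ t : ℝ, 0 ≤ t → 0 < α t)
    (hΔpos : ∀ t : ℝ, 0 ≤ t → 0 < α t + t * β t)
    (hF : ∀ t : ℝ, 0 ≤ t →
      (α t * β t - t * (deriv α t) ^ 2 - 2 * α t * deriv α t) / (α t + t * β t) = 0) :
    ∀ t : ℝ, 0 ≤ t → 0 < α t + t * deriv α t := by
  have hderiv : ∀ t ∈ Ici (0 : ℝ),
      HasDerivWithinAt (fun x => x * α x) (α t + t * deriv α t) (Ici 0) t := fun t ht => by
    simpa using ((hasDerivAt_id' t).fun_mul (hα t ht).hasDerivAt).hasDerivWithinAt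
  have hne : ∀ t ∈ Ici (0 : ℝ), α t + t * deriv α t ≠ 0 := fun t ht =>
    add_mul_ne_zero_of_div_eq_zero (hαpos t ht) (hΔpos t ht) (hF t ht)
  have h0 : 0 < α 0 + 0 * deriv α 0 := by simpa using hαpos 0 le_rfl
  exact forall_pos_of_hasDerivWithinAt_of_ne_zero (convex_Ici 0) hderiv hne self_mem_Ici h0

/-- If F ≡ 0 on [0,∞) then α + tα' > 0 on [0,∞). -/
theorem stmt_2 (α β : ℝ → ℝ)
    (hα : ∀ t : ℝ, 0 ≤ t → DifferentiableAt ℝ α t)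
    (hβ : ∀ t : ℝ, 0 ≤ t → DifferentiableAt ℝ β t)
    (hαpos : ∀ t : ℝ, 0 ≤ t → 0 < α t)
    (hΔpos : ∀ t : ℝ, 0 ≤ t → 0 < α t + t * β t)
    (hF : ∀ t : ℝ, 0 ≤ t →
      (α t * β t - t * (deriv α t) ^ 2 - 2 * α t * deriv α t) / (α t + t * β t) = 0) :
    ∀ t : ℝ, 0 ≤ t → 0 < α t + t * deriv α t :=
  stmt_2_general α β hα hαpos hΔpos hF
end

section
/- Let α, β : [0,∞) → ℝ be twice differentiable with α(t) > 0 and α(t) + t·β(t) > 0 for all t ≥ 0. Define F(t) = (α(t)β(t) − t·(α'(t))² − 2α(t)α'(t))/(α(t)+t·β(t)), φ(t) = α(t) + t·α'(t), Δ(t) = α(t) + t·β(t), and H(t) = φ(t)·(d/dt) ln(α(t)Δ(t)) − 2φ'(t). If F(t) = 0 for all t ≥ 0, then H(t) = 0 for all t ≥ 0. -/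
/-! Under `F = 0` the product `αΔ` is the perfect square `φ²` on `[0, ∞)`, so
`ln(αΔ) = 2 ln |φ|` there and `H = φ · 2φ'/φ - 2φ' = 0`. At `t = 0` the two functions agree
only on one side, which still determines the (two-sided) derivative. -/

open Set

theorem deriv_eq_of_eqOn {𝕜 F : Type*} [NontriviallyNormedField 𝕜] [NormedAddCommGroup F]
    [NormedSpace 𝕜 F] {f g : 𝕜 → F} {s : Set 𝕜} {x : 𝕜} (hf : DifferentiableAt 𝕜 f x)
    (hg : DifferentiableAt 𝕜 g x) (hs : UniqueDiffWithinAt 𝕜 s x) (hfg : EqOn f g s)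
    (hx : x ∈ s) : deriv f x = deriv g x := by
  rw [← hf.derivWithin hs, ← hg.derivWithin hs]
  exact derivWithin_congr hfg (hfg hx)

theorem mul_add_mul_eq_sq_of_sub_eq_zero {a b d t : ℝ}
    (h : a * b - t * d ^ 2 - 2 * a * d = 0) : a * (a + t * b) = (a + t * d) ^ 2 := by
  linear_combination t * h

theorem stmt_4_general (α β : ℝ → ℝ)
    (hα : ∀ t : ℝ, 0 ≤ t → DifferentiableAt ℝ α t)
    (hα' : ∀ t : ℝ, 0 ≤ t → DifferentiableAt ℝ (deriv α) t)
    (hβ : ∀ t : ℝ, 0 ≤ t → DifferentiableAt ℝ β t)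
    (hαpos : ∀ t : ℝ, 0 ≤ t → 0 < α t)
    (hΔpos : ∀ t : ℝ, 0 ≤ t → 0 < α t + t * β t)
    (hF : ∀ t : ℝ, 0 ≤ t →
      (α t * β t - t * (deriv α t) ^ 2 - 2 * α t * deriv α t) / (α t + t * β t) = 0) :
    ∀ t : ℝ, 0 ≤ t →
      (α t + t * deriv α t) *
          deriv (fun s : ℝ => Real.log (α s * (α s + s * β s))) t -
        2 * deriv (fun s : ℝ => α s + s * deriv α s) t = 0 := by
  intro t ht
  set φ : ℝ → ℝ := fun s => α s + s * deriv α s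
  have hαΔ : EqOn (fun s => α s * (α s + s * β s)) (fun s => φ s ^ 2) (Ici 0) := fun s hs =>
    mul_add_mul_eq_sq_of_sub_eq_zero <|
      (div_eq_zero_iff.mp (hF s hs)).resolve_right (hΔpos s hs).ne'
  have hαΔ_pos : 0 < α t * (α t + t * β t) := mul_pos (hαpos t ht) (hΔpos t ht)
  have hφ_ne : φ t ≠ 0 := by
    intro h
    have := hαΔ (mem_Ici.mpr ht)
    simp only [h] at this
    linarith
  have hφ_diff : DifferentiableAt ℝ φ t :=
    (hα t ht).add (differentiableAt_id.mul (hα' t ht))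
  have hlog : deriv (fun s => Real.log (α s * (α s + s * β s))) t
      = deriv (fun s => 2 * Real.log (φ s)) t := by
    refine deriv_eq_of_eqOn ?_ ((hφ_diff.log hφ_ne).const_mul 2)
      (uniqueDiffOn_Ici 0 t ht) (fun s hs => ?_) ht
    · exact ((hα t ht).mul ((hα t ht).add (differentiableAt_id.mul (hβ t ht)))).log
        hαΔ_pos.ne'
    · simp only [hαΔ hs, Real.log_pow, Nat.cast_ofNat]
  rw [hlog, deriv_const_mul _ (hφ_diff.log hφ_ne), deriv.log hφ_diff hφ_ne]
  field_simp
  ring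

/-- If α, β are twice differentiable with α > 0 and α + tβ > 0 on [0,∞), and F ≡ 0 there,
then H ≡ 0 there. -/
theorem stmt_4 (α β : ℝ → ℝ)
    (hα : ∀ t : ℝ, 0 ≤ t → DifferentiableAt ℝ α t)
    (hα' : ∀ t : ℝ, 0 ≤ t → DifferentiableAt ℝ (deriv α) t)
    (hβ : ∀ t : ℝ, 0 ≤ t → DifferentiableAt ℝ β t)
    (hβ' : ∀ t : ℝ, 0 ≤ t → DifferentiableAt ℝ (deriv β) t)
    (hαpos : ∀ t : ℝ, 0 ≤ t → 0 < α t)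
    (hΔpos : ∀ t : ℝ, 0 ≤ t → 0 < α t + t * β t)
    (hF : ∀ t : ℝ, 0 ≤ t →
      (α t * β t - t * (deriv α t) ^ 2 - 2 * α t * deriv α t) / (α t + t * β t) = 0) :
    ∀ t : ℝ, 0 ≤ t →
      (α t + t * deriv α t) *
          deriv (fun s : ℝ => Real.log (α s * (α s + s * β s))) t -
        2 * deriv (fun s : ℝ => α s + s * deriv α s) t = 0 :=
  stmt_4_general α β hα hα' hβ hαpos hΔpos hF
end

section
/- Let α, β : [0,∞) → ℝ be twice differentiable functions such that α(t) > 0, α(t) + t·α'(t) > 0, and α(t) + t·β(t) > 0 for all t ≥ 0. Define φ(t) = α(t) + t·α'(t), Δ(t) = α(t) + t·β(t), H(t) = φ(t)·(d/dt) ln(α(t)Δ(t)) − 2φ'(t), and F(t) = (α(t)β(t) − t·(α'(t))² − 2α(t)α'(t))/Δ(t). If H(t) = 0 for all t ≥ 0, then F(t) = 0 for all t ≥ 0. -/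
/-!
Since `φ > 0`, the hypothesis `H = 0` says that `ln (α Δ)` and `2 ln φ` have the same derivative
on `[0, ∞)`; they agree at `t = 0`, where `α Δ = α² = φ²`, so `α Δ = φ²` everywhere. Expanding,
`α Δ - φ² = t (α β - t α'² - 2 α α')`, so the numerator of `F` vanishes for `t > 0`, and at `t = 0`
by continuity.
-/

open Real Set Filter

theorem eq_sq_of_mul_deriv_log_sub_two_deriv_eq_zero {P Q : ℝ → ℝ} {a : ℝ}
    (hP : ∀ t, a ≤ t → DifferentiableAt ℝ P t) (hQ : ∀ t, a ≤ t → DifferentiableAt ℝ Q t)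
    (hPpos : ∀ t, a ≤ t → 0 < P t) (hQpos : ∀ t, a ≤ t → 0 < Q t)
    (hPQ : ∀ t, a ≤ t → Q t * deriv (fun s => log (P s)) t - 2 * deriv Q t = 0)
    (ha : P a = Q a ^ 2) : ∀ t, a ≤ t → P t = Q t ^ 2 := by
  have hlogP : ∀ t, a ≤ t → HasDerivAt (fun s => log (P s)) (deriv (fun s => log (P s)) t) t :=
    fun t ht => ((hP t ht).log (hPpos t ht).ne').hasDerivAt
  -- `hPQ` says that `log P` and `2 log Q` have the same derivative.
  have hlogQ : ∀ t, a ≤ t →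
      HasDerivAt (fun s => 2 * log (Q s)) (deriv (fun s => log (P s)) t) t := by
    intro t ht
    refine (((hQ t ht).hasDerivAt.log (hQpos t ht).ne').const_mul 2).congr_deriv ?_
    rw [mul_div_assoc', div_eq_iff (hQpos t ht).ne']
    linarith [hPQ t ht]
  intro t ht
  have hlog : log (P t) = 2 * log (Q t) := by
    refine eq_of_has_deriv_right_eq (fun x hx => (hlogP x hx.1).hasDerivWithinAt)
      (fun x hx => (hlogQ x hx.1).hasDerivWithinAt)
      (fun x hx => (hlogP x hx.1).continuousAt.continuousWithinAt)
      (fun x hx => (hlogQ x hx.1).continuousAt.continuousWithinAt) ?_ t ⟨ht, le_rfl⟩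
    simp only [ha, log_pow, Nat.cast_ofNat]
  refine log_injOn_pos (hPpos t ht) (pow_pos (hQpos t ht) 2) ?_
  rw [hlog, log_pow, Nat.cast_ofNat]

theorem eq_zero_of_continuousWithinAt_of_eqOn_Ioi {k : ℝ → ℝ} {a : ℝ}
    (hk : ContinuousWithinAt k (Ioi a) a) (h : EqOn k 0 (Ioi a)) : k a = 0 :=
  tendsto_nhds_unique hk.tendsto
    (tendsto_const_nhds.congr' (eventuallyEq_of_mem self_mem_nhdsWithin h.symm))

theorem stmt_5_general (α β : ℝ → ℝ)
    (hα : ∀ t : ℝ, 0 ≤ t → DifferentiableAt ℝ α t)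
    (hα' : ∀ t : ℝ, 0 ≤ t → DifferentiableAt ℝ (deriv α) t)
    (hβ : ∀ t : ℝ, 0 ≤ t → DifferentiableAt ℝ β t)
    (hαpos : ∀ t : ℝ, 0 ≤ t → 0 < α t)
    (hφpos : ∀ t : ℝ, 0 ≤ t → 0 < α t + t * deriv α t)
    (hΔpos : ∀ t : ℝ, 0 ≤ t → 0 < α t + t * β t)
    (hH : ∀ t : ℝ, 0 ≤ t →
      (α t + t * deriv α t) *
          deriv (fun s : ℝ => Real.log (α s * (α s + s * β s))) t -
        2 * deriv (fun s : ℝ => α s + s * deriv α s) t = 0) :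
    ∀ t : ℝ, 0 ≤ t →
      (α t * β t - t * (deriv α t) ^ 2 - 2 * α t * deriv α t) / (α t + t * β t) = 0 := by
  have hsq : ∀ t, 0 ≤ t → α t * (α t + t * β t) = (α t + t * deriv α t) ^ 2 :=
    eq_sq_of_mul_deriv_log_sub_two_deriv_eq_zero
      (fun t ht => (hα t ht).mul ((hα t ht).add (differentiableAt_id.mul (hβ t ht))))
      (fun t ht => (hα t ht).add (differentiableAt_id.mul (hα' t ht)))
      (fun t ht => mul_pos (hαpos t ht) (hΔpos t ht)) hφpos hH (by simp [sq])
  set k : ℝ → ℝ := fun s => α s * β s - s * deriv α s ^ 2 - 2 * α s * deriv α s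
  have hk_pos : EqOn k 0 (Ioi 0) := fun t ht =>
    (mul_eq_zero.1 (by linear_combination hsq t ht.le : t * k t = 0)).resolve_left ht.ne'
  have hk_cont : ContinuousAt k 0 := by
    have := (hα 0 le_rfl).continuousAt
    have := (hβ 0 le_rfl).continuousAt
    have := (hα' 0 le_rfl).continuousAt
    fun_prop
  have hk0 : k 0 = 0 :=
    eq_zero_of_continuousWithinAt_of_eqOn_Ioi hk_cont.continuousWithinAt hk_pos
  intro t ht
  rw [div_eq_zero_iff]
  left
  rcases ht.eq_or_lt with rfl | ht
  · exact hk0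
  · exact hk_pos ht

/-- If α, β are twice differentiable with α > 0, α + tα' > 0 and α + tβ > 0 on [0,∞),
and H ≡ 0 there, then F ≡ 0 there. -/
theorem stmt_5 (α β : ℝ → ℝ)
    (hα : ∀ t : ℝ, 0 ≤ t → DifferentiableAt ℝ α t)
    (hα' : ∀ t : ℝ, 0 ≤ t → DifferentiableAt ℝ (deriv α) t)
    (hβ : ∀ t : ℝ, 0 ≤ t → DifferentiableAt ℝ β t)
    (hβ' : ∀ t : ℝ, 0 ≤ t → DifferentiableAt ℝ (deriv β) t)
    (hαpos : ∀ t : ℝ, 0 ≤ t → 0 < α t)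
    (hφpos : ∀ t : ℝ, 0 ≤ t → 0 < α t + t * deriv α t)
    (hΔpos : ∀ t : ℝ, 0 ≤ t → 0 < α t + t * β t)
    (hH : ∀ t : ℝ, 0 ≤ t →
      (α t + t * deriv α t) *
          deriv (fun s : ℝ => Real.log (α s * (α s + s * β s))) t -
        2 * deriv (fun s : ℝ => α s + s * deriv α s) t = 0) :
    ∀ t : ℝ, 0 ≤ t →
      (α t * β t - t * (deriv α t) ^ 2 - 2 * α t * deriv α t) / (α t + t * β t) = 0 :=
  stmt_5_general α β hα hα' hβ hαpos hφpos hΔpos hH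
end
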